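/- arXiv:1506.00737 — 6 statements merged into one kernel-verified Lean document; each statement's English description precedes it below -/
import Mathlib

section
/- Let A and B be positive semidefinite bounded self-adjoint operators on a Hilbert space (or positive semidefinite n×n complex matrices). Then ‖AB + BA‖ ≤ ‖A² + B²‖, where ‖·‖ is the operator norm. -/
theorem norm_mul_add_mul_le_norm_sq_add_sq
    {H : Type*} [NormedAddCommGroup H] [InnerProductSpace ℂ H] [CompleteSpace H]
    (A B : H →L[ℂ] H) (hA : A.IsPositive) (hB : B.IsPositive) :
    ‖A * B + B * A‖ ≤ ‖A ^ 2 + B ^ 2‖ := by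
  have hAsa : IsSelfAdjoint A := hA.isSelfAdjoint
  have hBsa : IsSelfAdjoint B := hB.isSelfAdjoint
  set T := A * B + B * A with hTdef
  set S := A ^ 2 + B ^ 2 with hSdef
  have hTsa : IsSelfAdjoint T := by
    rw [IsSelfAdjoint, hTdef, star_add, star_mul, star_mul, hAsa.star_eq, hBsa.star_eq, add_comm]
  have hSsa : IsSelfAdjoint S := by
    rw [IsSelfAdjoint, hSdef, star_add, star_pow, star_pow, hAsa.star_eq, hBsa.star_eq]
  have h1 : T ≤ S := by
    rw [← sub_nonneg]
    have h := star_mul_self_nonneg (A - B)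
    rwa [(hAsa.sub hBsa).star_eq, show (A - B) * (A - B) = S - T by rw [hTdef, hSdef]; noncomm_ring] at h
  have h2 : -S ≤ T := by
    rw [← sub_nonneg, sub_neg_eq_add]
    have h := star_mul_self_nonneg (A + B)
    rwa [(hAsa.add hBsa).star_eq, show (A + B) * (A + B) = T + S by rw [hTdef, hSdef]; noncomm_ring] at h
  have hup : T ≤ algebraMap ℝ (H →L[ℂ] H) ‖S‖ :=
    h1.trans (IsSelfAdjoint.le_algebraMap_norm_self hSsa)
  have hlo : algebraMap ℝ (H →L[ℂ] H) (-‖S‖) ≤ T := by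
    rw [map_neg]
    exact (neg_le_neg (IsSelfAdjoint.le_algebraMap_norm_self hSsa)).trans h2
  have hspec : ∀ x ∈ spectrum ℝ T, |x| ≤ ‖S‖ := fun x hx =>
    abs_le.mpr ⟨(algebraMap_le_iff_le_spectrum hTsa).mp hlo x hx,
      (le_algebraMap_iff_spectrum_le hTsa).mp hup x hx⟩
  rcases subsingleton_or_nontrivial (H →L[ℂ] H) with hsub | hnt
  · simp [Subsingleton.elim T 0, norm_nonneg]
  · rcases CStarAlgebra.norm_or_neg_norm_mem_spectrum hTsa with h' | h'
    · simpa using (abs_le.mp (hspec _ h')).2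
    · have := hspec _ h'
      rw [abs_neg, abs_norm] at this
      exact this
end

section
/- If 0 ≤ A ≤ B and m·I ≤ B ≤ M·I with 0 < m ≤ M, then A² ≤ ((M+m)²/(4Mm))·B². -/
/-!
For invertible `b`, `k = (M + m)² / (4Mm)` and `t = (M + m) / (2Mm)` there is the identity

  `k b² - a² = (a b⁻¹) (b - m) (M - b) (b⁻¹ a) + Mm (a b⁻¹ - t b) (b⁻¹ a - t b)`
  `            + (M + m) (a - a b⁻¹ a)`.

The first term is nonnegative because `b - m ≥ 0` and `M - b ≥ 0` commute, the second is
a square, and the third is nonnegative because `0 ≤ a ≤ b` forces `a b⁻¹ a ≤ a`: with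
`e = b - a`, `a - a b⁻¹ a = (b⁻¹ a)⋆ e (b⁻¹ a) + (b⁻¹ e)⋆ a (b⁻¹ e)`.
-/

open Matrix
open scoped ComplexOrder MatrixOrder Ring Matrix.Norms.L2Operator

theorem mul_ringInverse_mul_le_self {R : Type*} [Ring R] [StarRing R] [PartialOrder R]
    [StarOrderedRing R] {a b : R} (hb : IsUnit b) (ha : 0 ≤ a) (hab : a ≤ b) :
    a * b⁻¹ʳ * a ≤ a := by
  have ha' : IsSelfAdjoint a := .of_nonneg ha
  have hv : IsSelfAdjoint b⁻¹ʳ := (IsSelfAdjoint.of_nonneg (ha.trans hab)).ringInverse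
  have key : a - a * b⁻¹ʳ * a = star (b⁻¹ʳ * a) * (b - a) * (b⁻¹ʳ * a) +
      star (b⁻¹ʳ * (b - a)) * a * (b⁻¹ʳ * (b - a)) := by
    simp only [star_mul, star_sub, star_one, ha'.star_eq, hv.star_eq, mul_sub, sub_mul, mul_assoc,
      mul_one, one_mul, Ring.inverse_mul_cancel _ hb]
    abel
  rw [← sub_nonneg, key]
  exact add_nonneg (star_left_conjugate_nonneg (sub_nonneg.2 hab) _)
    (star_left_conjugate_nonneg ha _)

theorem kantorovich_smul_sq_sub_sq_eq {R : Type*} [Ring R] [Algebra ℝ R] {a b : R}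
    (hb : IsUnit b) {m M : ℝ} (hm : m ≠ 0) (hM : M ≠ 0) :
    ((M + m) ^ 2 / (4 * M * m)) • b ^ 2 - a ^ 2 =
      a * b⁻¹ʳ * ((b - algebraMap ℝ R m) * (algebraMap ℝ R M - b)) * (b⁻¹ʳ * a) +
      (M * m) • ((a * b⁻¹ʳ - ((M + m) / (2 * M * m)) • b) *
        (b⁻¹ʳ * a - ((M + m) / (2 * M * m)) • b)) +
      (M + m) • (a - a * b⁻¹ʳ * a) := by
  simp only [Algebra.algebraMap_eq_smul_one, mul_sub, sub_mul, smul_mul_assoc, mul_smul_comm,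
    mul_assoc, mul_one, one_mul, Ring.mul_inverse_cancel_left _ _ hb,
    Ring.inverse_mul_cancel_left _ _ hb, Ring.inverse_mul_cancel _ hb, pow_two, smul_sub,
    smul_smul]
  match_scalars <;> field_simp <;> ring

section CStarAlgebra

variable {A : Type*} [CStarAlgebra A] [PartialOrder A] [StarOrderedRing A]

theorem sub_algebraMap_mul_algebraMap_sub_nonneg {b : A} {m M : ℝ}
    (hmb : algebraMap ℝ A m ≤ b) (hbM : b ≤ algebraMap ℝ A M) :
    0 ≤ (b - algebraMap ℝ A m) * (algebraMap ℝ A M - b) :=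
  Commute.mul_nonneg (sub_nonneg.2 hmb) (sub_nonneg.2 hbM) <|
    ((Algebra.commute_algebraMap_right M b).sub_right (.refl b)).sub_left
      (Algebra.commute_algebraMap_left m _)

theorem sq_le_kantorovich_smul_sq {a b : A} {m M : ℝ} (hm : 0 < m) (hmM : m ≤ M)
    (ha : 0 ≤ a) (hab : a ≤ b) (hmb : algebraMap ℝ A m ≤ b)
    (hbM : b ≤ algebraMap ℝ A M) :
    a ^ 2 ≤ ((M + m) ^ 2 / (4 * M * m)) • b ^ 2 := by
  have hM : 0 < M := hm.trans_le hmM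
  have hb : IsUnit b := CStarAlgebra.isUnit_of_le _ hmb (isStrictlyPositive_algebraMap hm)
  have ha' : IsSelfAdjoint a := .of_nonneg ha
  have hb' : IsSelfAdjoint b := .of_nonneg (ha.trans hab)
  have hv : IsSelfAdjoint b⁻¹ʳ := hb'.ringInverse
  rw [← sub_nonneg, kantorovich_smul_sq_sub_sq_eq hb hm.ne' hM.ne']
  set t := (M + m) / (2 * M * m)
  have hy : star (b⁻¹ʳ * a) = a * b⁻¹ʳ := by rw [star_mul, ha'.star_eq, hv.star_eq]
  have hz : star (b⁻¹ʳ * a - t • b) = a * b⁻¹ʳ - t • b := by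
    rw [star_sub, hy, star_smul, star_trivial, hb'.star_eq]
  refine add_nonneg (add_nonneg ?_ ?_) ?_
  · rw [← hy]
    exact star_left_conjugate_nonneg (sub_algebraMap_mul_algebraMap_sub_nonneg hmb hbM) _
  · rw [← hz]
    exact smul_nonneg (by positivity) (star_mul_self_nonneg _)
  · exact smul_nonneg (by positivity) (sub_nonneg.2 (mul_ringInverse_mul_le_self hb ha hab))

end CStarAlgebra

theorem sq_le_kantorovich_sq
    {n : ℕ} (A B : Matrix (Fin n) (Fin n) ℂ) (m M : ℝ) (hm : 0 < m) (hmM : m ≤ M)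
    (hA : A.PosSemidef) (hAB : (B - A).PosSemidef)
    (hBm : (B - m • (1 : Matrix (Fin n) (Fin n) ℂ)).PosSemidef)
    (hBM : ((M • (1 : Matrix (Fin n) (Fin n) ℂ)) - B).PosSemidef) :
    ((((M + m) ^ 2 / (4 * M * m)) • B ^ 2) - A ^ 2).PosSemidef := by
  rw [← Algebra.algebraMap_eq_smul_one] at hBm hBM
  exact le_iff.1 <| sq_le_kantorovich_smul_sq hm hmM hA.nonneg (le_iff.2 hAB) (le_iff.2 hBm)
    (le_iff.2 hBM)
end

section
/- Let A be a self-adjoint operator with m·I ≤ A ≤ M·I for 0 < m ≤ M, and let x, y be vectors with ⟨x, y⟩ = 0. Then |⟨x, A y⟩|² ≤ ((M−m)/(M+m))² · ⟨x, A x⟩ · ⟨y, A y⟩. -/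
/-!
Orthogonality gives `⟪x, P y⟫ = ⟪x, A y⟫ = -⟪x, Q y⟫` for the positive operators `P = A - m` and
`Q = M - A`, so Cauchy–Schwarz for their semi-inner products bounds `‖⟪x, A y⟫‖²` both by `p r`
and by `q s`, where `p, q` and `r, s` are the values of the forms of `P, Q` at `x` and at `y`.
Since `(M - m) A = M P + m Q`, the product `(M - m)² ⟪x, A x⟫ ⟪y, A y⟫` expands to
`M² p r + m² q s + M m (p s + q r)`, and AM–GM gives `p s + q r ≥ 2 ‖⟪x, A y⟫‖²`.
-/

open ContinuousLinearMap InnerProductSpace RCLike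

theorem two_mul_le_add_of_le_mul_of_le_mul {c p q r s : ℝ} (hp : 0 ≤ p) (hq : 0 ≤ q)
    (hr : 0 ≤ r) (hs : 0 ≤ s) (hpr : c ≤ p * r) (hqs : c ≤ q * s) :
    2 * c ≤ p * s + q * r := by
  have hps := mul_nonneg hp hs
  have hqr := mul_nonneg hq hr
  rcases le_or_gt c 0 with hc | hc
  · linarith
  · have hsq : c ^ 2 ≤ (p * s) * (q * r) :=
      calc c ^ 2 = c * c := sq c
        _ ≤ (p * r) * (q * s) := mul_le_mul hpr hqs hc.le (hpr.trans' hc.le)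
        _ = (p * s) * (q * r) := by ring
    nlinarith [sq_nonneg (p * s - q * r)]

theorem add_sq_mul_le_of_le_mul_of_le_mul {m M c p q r s : ℝ} (hm : 0 ≤ m) (hM : 0 ≤ M)
    (hp : 0 ≤ p) (hq : 0 ≤ q) (hr : 0 ≤ r) (hs : 0 ≤ s) (hpr : c ≤ p * r) (hqs : c ≤ q * s) :
    (M + m) ^ 2 * c ≤ (M * p + m * q) * (M * r + m * s) := by
  have hmix := two_mul_le_add_of_le_mul_of_le_mul hp hq hr hs hpr hqs
  calc (M + m) ^ 2 * c = M ^ 2 * c + m ^ 2 * c + M * m * (2 * c) := by ring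
    _ ≤ M ^ 2 * (p * r) + m ^ 2 * (q * s) + M * m * (p * s + q * r) := by gcongr
    _ = (M * p + m * q) * (M * r + m * s) := by ring

theorem ContinuousLinearMap.IsPositive.norm_inner_sq_le {H : Type*} [NormedAddCommGroup H]
    [InnerProductSpace ℂ H] [CompleteSpace H] {T : H →L[ℂ] H} (hT : T.IsPositive) (x y : H) :
    ‖⟪x, T y⟫_ℂ‖ ^ 2 ≤ re ⟪x, T x⟫_ℂ * re ⟪y, T y⟫_ℂ := by
  obtain ⟨S, rfl⟩ := CStarAlgebra.nonneg_iff_eq_star_mul_self.mp ((nonneg_iff_isPositive T).mpr hT)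
  have h (u v : H) : ⟪u, (star S * S) v⟫_ℂ = ⟪S u, S v⟫_ℂ := by
    rw [star_eq_adjoint, mul_apply_eq_comp, adjoint_inner_right]
  simp only [h, inner_self_eq_norm_sq]
  rw [← mul_pow]
  gcongr
  exact norm_inner_le_norm _ _

section

variable {H : Type*} [NormedAddCommGroup H] [InnerProductSpace ℂ H]

theorem inner_sub_smul_one_apply (T : H →L[ℂ] H) (c : ℝ) (u v : H) :
    ⟪u, (T - c • (1 : H →L[ℂ] H)) v⟫_ℂ = ⟪u, T v⟫_ℂ - c * ⟪u, v⟫_ℂ := by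
  simp

theorem inner_smul_one_sub_apply (T : H →L[ℂ] H) (c : ℝ) (u v : H) :
    ⟪u, (c • (1 : H →L[ℂ] H) - T) v⟫_ℂ = c * ⟪u, v⟫_ℂ - ⟪u, T v⟫_ℂ := by
  simp

end

theorem wielandt_inequality
    {H : Type*} [NormedAddCommGroup H] [InnerProductSpace ℂ H] [CompleteSpace H]
    (A : H →L[ℂ] H) (m M : ℝ) (hm : 0 < m) (hmM : m ≤ M)
    (h1 : (A - m • (1 : H →L[ℂ] H)).IsPositive)
    (h2 : ((M • (1 : H →L[ℂ] H)) - A).IsPositive)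
    (x y : H) (hxy : (inner ℂ x y : ℂ) = 0) :
    ‖(inner ℂ x (A y) : ℂ)‖ ^ 2 ≤
      ((M - m) / (M + m)) ^ 2 * ((inner ℂ x (A x) : ℂ).re * (inner ℂ y (A y) : ℂ).re) := by
  have hM : 0 ≤ M := hm.le.trans hmM
  have hP : ⟪x, (A - m • (1 : H →L[ℂ] H)) y⟫_ℂ = ⟪x, A y⟫_ℂ := by
    rw [inner_sub_smul_one_apply, hxy, mul_zero, sub_zero]
  have hQ : ‖⟪x, (M • (1 : H →L[ℂ] H) - A) y⟫_ℂ‖ = ‖⟪x, A y⟫_ℂ‖ := by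
    rw [inner_smul_one_sub_apply, hxy, mul_zero, zero_sub, norm_neg]
  have hsplit (z : H) : (M - m) * (⟪z, A z⟫_ℂ).re =
      M * re ⟪z, (A - m • (1 : H →L[ℂ] H)) z⟫_ℂ + m * re ⟪z, (M • (1 : H →L[ℂ] H) - A) z⟫_ℂ := by
    simp only [inner_sub_smul_one_apply, inner_smul_one_sub_apply, map_sub, re_to_complex,
      Complex.re_ofReal_mul]
    ring
  have key := add_sq_mul_le_of_le_mul_of_le_mul hm.le hM
    (h1.re_inner_nonneg_right x) (h2.re_inner_nonneg_right x)
    (h1.re_inner_nonneg_right y) (h2.re_inner_nonneg_right y)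
    (hP ▸ h1.norm_inner_sq_le x y) (hQ ▸ h2.norm_inner_sq_le x y)
  rw [← hsplit, ← hsplit] at key
  rw [div_pow, div_mul_eq_mul_div, le_div_iff₀ (by positivity)]
  linarith
end

section
/- Let A be an n×n Hermitian matrix with m·I ≤ A ≤ M·I, 0 < m ≤ M, and let X, Y be n×k matrices with X*X = I, Y*Y = I, and X*Y = 0. Then (X*AY)(Y*AY)^{-1}(Y*AX) ≤ ((M−m)/(M+m))² · (X*AX) in the Loewner order. -/
/-!
By the Schur complement criterion, the claim is the positivity of the block matrix
`[[c XᴴAX, XᴴAY], [YᴴAX, YᴴAY]]`, `c = ((M - m) / (M + m))²`, i.e. of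
`c ⟪x, Ax⟫ + 2 Re ⟪x, Ay⟫ + ⟪y, Ay⟫` for `x = Xu` and `y = Yw`, which are orthogonal.
By AM-GM this follows from the Wielandt inequality `|⟪x, Ay⟫|² ≤ c ⟪x, Ax⟫ ⟪y, Ay⟫` for
orthogonal `x, y`. That one comes from Cauchy-Schwarz for the positive forms of `A - m` and
`M - A`: by orthogonality `±⟪x, Ay⟫` is their off-diagonal entry, and the two resulting bounds
combine to Wielandt's constant by an elementary real inequality.
-/

open Matrix
open scoped ComplexOrder

theorem wielandt_scalar_of_sum_le {m M p q a d : ℝ} (hm : 0 < m) (hmM : m ≤ M) (hp : 0 ≤ p)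
    (hq : 0 ≤ q) (ha : m * p ≤ a) (ha' : a ≤ M * p) (hd : m * q ≤ d) (hd' : d ≤ M * q)
    (hs : a * q + d * p ≤ (M + m) * (p * q)) :
    (M + m) ^ 2 * ((a - m * p) * (d - m * q)) ≤ (M - m) ^ 2 * (a * d) := by
  rcases hp.eq_or_lt with rfl | hp
  · obtain rfl : a = 0 := by linarith
    simp
  rcases hq.eq_or_lt with rfl | hq
  · obtain rfl : d = 0 := by linarith
    simp
  have hs' : m * (M + m) * (p * q) ≤ M * (a * q + d * p) := by
    nlinarith [mul_le_mul_of_nonneg_right ha hq.le, mul_le_mul_of_nonneg_right hd hp.le]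
  have hkey : 0 ≤ ((M - m) ^ 2 * (a * d) - (M + m) ^ 2 * ((a - m * p) * (d - m * q))) * (p * q) := by
    have hs := sub_nonneg.2 hs
    have hs' := sub_nonneg.2 hs'
    have hM : 0 ≤ M := by linarith
    calc 0 ≤ m * (M * (a * q - d * p) ^ 2 + ((M + m) * (p * q) - (a * q + d * p)) *
          (M * (a * q + d * p) - m * (M + m) * (p * q))) := by positivity
      _ = _ := by ring
  exact sub_nonneg.1 (nonneg_of_mul_nonneg_left hkey (mul_pos hp hq))

theorem wielandt_scalar {m M p q a d β : ℝ} (hm : 0 < m) (hmM : m ≤ M) (hp : 0 ≤ p) (hq : 0 ≤ q)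
    (ha : m * p ≤ a) (ha' : a ≤ M * p) (hd : m * q ≤ d) (hd' : d ≤ M * q)
    (hβ : β ≤ (a - m * p) * (d - m * q)) (hβ' : β ≤ (M * p - a) * (M * q - d)) :
    (M + m) ^ 2 * β ≤ (M - m) ^ 2 * (a * d) := by
  rcases le_total (a * q + d * p) ((M + m) * (p * q)) with hs | hs
  · calc (M + m) ^ 2 * β ≤ (M + m) ^ 2 * ((a - m * p) * (d - m * q)) := by gcongr
      _ ≤ (M - m) ^ 2 * (a * d) := wielandt_scalar_of_sum_le hm hmM hp hq ha ha' hd hd' hs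
  · -- reflecting `a ↦ (M + m) p - a`, `d ↦ (M + m) q - d` swaps the two bounds on `β`
    have h := wielandt_scalar_of_sum_le (a := (M + m) * p - a) (d := (M + m) * q - d) hm hmM hp hq
      (by linarith) (by linarith) (by linarith) (by linarith) (by nlinarith)
    calc (M + m) ^ 2 * β ≤ (M + m) ^ 2 * ((M * p - a) * (M * q - d)) := by gcongr
      _ = (M + m) ^ 2 * (((M + m) * p - a - m * p) * ((M + m) * q - d - m * q)) := by ring
      _ ≤ (M - m) ^ 2 * (((M + m) * p - a) * ((M + m) * q - d)) := h
      _ ≤ (M - m) ^ 2 * (a * d) := mul_le_mul_of_nonneg_left (by nlinarith) (sq_nonneg _)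

namespace Matrix

variable {𝕜 : Type*} [RCLike 𝕜] {n k l : Type*} [Fintype n] [Fintype k] [Fintype l]

theorem PosSemidef.norm_dotProduct_mulVec_sq_le {B : Matrix n n 𝕜} (hB : B.PosSemidef)
    (x y : n → 𝕜) :
    ‖star x ⬝ᵥ (B *ᵥ y)‖ ^ 2 ≤
      RCLike.re (star x ⬝ᵥ (B *ᵥ x)) * RCLike.re (star y ⬝ᵥ (B *ᵥ y)) := by
  let _ := B.toSeminormedAddCommGroup hB
  let _ := B.toInnerProductSpace hB
  have h := inner_mul_inner_self_le (𝕜 := 𝕜) x y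
  rw [norm_inner_symm y x] at h
  simp only [dotProduct_comm (star _), sq]
  exact h

theorem PosSemidef.of_re_dotProduct_mulVec_nonneg {H : Matrix n n 𝕜} (hH : H.IsHermitian)
    (h : ∀ x, 0 ≤ RCLike.re (star x ⬝ᵥ (H *ᵥ x))) : H.PosSemidef :=
  .of_dotProduct_mulVec_nonneg hH fun x =>
    RCLike.nonneg_iff.2 ⟨h x, hH.im_star_dotProduct_mulVec_self x⟩

theorem star_mulVec_dotProduct_mulVec (X : Matrix n k 𝕜) (Y : Matrix n l 𝕜) (u : k → 𝕜)
    (w : l → 𝕜) : star (X *ᵥ u) ⬝ᵥ (Y *ᵥ w) = star u ⬝ᵥ ((Xᴴ * Y) *ᵥ w) := by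
  rw [← mulVec_mulVec, dotProduct_mulVec, star_mulVec, ← dotProduct_mulVec, ← dotProduct_mulVec]

theorem star_mulVec_dotProduct_mulVec_mulVec (X : Matrix n k 𝕜) (A : Matrix n n 𝕜)
    (Y : Matrix n l 𝕜) (u : k → 𝕜) (w : l → 𝕜) :
    star (X *ᵥ u) ⬝ᵥ (A *ᵥ (Y *ᵥ w)) = star u ⬝ᵥ ((Xᴴ * A * Y) *ᵥ w) := by
  rw [mulVec_mulVec, star_mulVec_dotProduct_mulVec, Matrix.mul_assoc]

theorem star_sumElim_dotProduct_fromBlocks_mulVec (P : Matrix k k 𝕜) (Q : Matrix k l 𝕜)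
    (C : Matrix l k 𝕜) (R : Matrix l l 𝕜) (u : k → 𝕜) (w : l → 𝕜) :
    star (Sum.elim u w) ⬝ᵥ (fromBlocks P Q C R *ᵥ Sum.elim u w) =
      star u ⬝ᵥ (P *ᵥ u) + star u ⬝ᵥ (Q *ᵥ w) + (star w ⬝ᵥ (C *ᵥ u) + star w ⬝ᵥ (R *ᵥ w)) := by
  simp only [Function.star_sumElim, fromBlocks_mulVec, sumElim_dotProduct_sumElim,
    Sum.elim_comp_inl, Sum.elim_comp_inr, dotProduct_add]

theorem PosSemidef.smul_sub_mul_inv_mul_conjTranspose_of_norm_sq_le [DecidableEq l]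
    {P : Matrix k k 𝕜} {Q : Matrix k l 𝕜} {R : Matrix l l 𝕜} (hP : P.PosSemidef) (hR : R.PosDef)
    {c : ℝ} (hc : 0 ≤ c) (hQ : ∀ u w, ‖star u ⬝ᵥ (Q *ᵥ w)‖ ^ 2 ≤
      c * (RCLike.re (star u ⬝ᵥ (P *ᵥ u)) * RCLike.re (star w ⬝ᵥ (R *ᵥ w)))) :
    (c • P - Q * R⁻¹ * Qᴴ).PosSemidef := by
  let _ := hR.isUnit.invertible
  rw [← hR.fromBlocks₂₂]
  refine .of_re_dotProduct_mulVec_nonneg ((hP.1.smul (.all c)).fromBlocks rfl hR.1) fun z => ?_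
  rw [← Sum.elim_comp_inl_inr z, star_sumElim_dotProduct_fromBlocks_mulVec]
  set u := z ∘ Sum.inl
  set w := z ∘ Sum.inr
  have hsymm : star w ⬝ᵥ (Qᴴ *ᵥ u) = star (star u ⬝ᵥ (Q *ᵥ w)) := by
    rw [star_dotProduct, star_mulVec, ← dotProduct_mulVec, conjTranspose_conjTranspose]
  simp only [map_add, hsymm, RCLike.star_def, RCLike.conj_re, smul_mulVec, dotProduct_smul,
    RCLike.smul_re]
  set b := star u ⬝ᵥ (Q *ᵥ w)
  set p := RCLike.re (star u ⬝ᵥ (P *ᵥ u))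
  set r := RCLike.re (star w ⬝ᵥ (R *ᵥ w))
  have hp : 0 ≤ p := hP.re_dotProduct_nonneg u
  have hr : 0 ≤ r := hR.posSemidef.re_dotProduct_nonneg w
  have hb : RCLike.re b ^ 2 ≤ ‖b‖ ^ 2 := by
    rw [← sq_abs]
    gcongr
    exact RCLike.abs_re_le_norm b
  have amgm : (2 * RCLike.re b) ^ 2 ≤ (c * p + r) ^ 2 := by
    nlinarith [hQ u w, sq_nonneg (c * p - r)]
  linarith [(abs_le_of_sq_le_sq' amgm (by positivity)).1]

theorem wielandt_inequality [DecidableEq n] {A : Matrix n n 𝕜} {m M : ℝ} (hm : 0 < m)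
    (hmM : m ≤ M) (h1 : (A - m • (1 : Matrix n n 𝕜)).PosSemidef)
    (h2 : (M • (1 : Matrix n n 𝕜) - A).PosSemidef) {x y : n → 𝕜} (hxy : star x ⬝ᵥ y = 0) :
    ‖star x ⬝ᵥ (A *ᵥ y)‖ ^ 2 ≤ ((M - m) / (M + m)) ^ 2 *
      (RCLike.re (star x ⬝ᵥ (A *ᵥ x)) * RCLike.re (star y ⬝ᵥ (A *ᵥ y))) := by
  have sub_smul_one (r : ℝ) (u v : n → 𝕜) :
      star u ⬝ᵥ ((A - r • (1 : Matrix n n 𝕜)) *ᵥ v) = star u ⬝ᵥ (A *ᵥ v) - r • (star u ⬝ᵥ v) := by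
    rw [sub_mulVec, smul_mulVec, one_mulVec, dotProduct_sub, dotProduct_smul]
  have smul_one_sub (r : ℝ) (u v : n → 𝕜) :
      star u ⬝ᵥ ((r • (1 : Matrix n n 𝕜) - A) *ᵥ v) = r • (star u ⬝ᵥ v) - star u ⬝ᵥ (A *ᵥ v) := by
    rw [sub_mulVec, smul_mulVec, one_mulVec, dotProduct_sub, dotProduct_smul]
  have hp := (RCLike.nonneg_iff.1 (dotProduct_star_self_nonneg x)).1
  have hq := (RCLike.nonneg_iff.1 (dotProduct_star_self_nonneg y)).1
  have ha := h1.re_dotProduct_nonneg x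
  have ha' := h2.re_dotProduct_nonneg x
  have hd := h1.re_dotProduct_nonneg y
  have hd' := h2.re_dotProduct_nonneg y
  have cs := h1.norm_dotProduct_mulVec_sq_le x y
  have cs' := h2.norm_dotProduct_mulVec_sq_le x y
  simp only [sub_smul_one, smul_one_sub, hxy, smul_zero, sub_zero, zero_sub, norm_neg, map_sub,
    RCLike.smul_re, sub_nonneg] at ha ha' hd hd' cs cs'
  rw [div_pow, div_mul_eq_mul_div, le_div_iff₀ (pow_pos (by linarith) 2)]
  linarith [wielandt_scalar hm hmM hp hq ha ha' hd hd' cs cs']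

end Matrix

theorem operator_wielandt_inequality_general
    {n k : ℕ} (A : Matrix (Fin n) (Fin n) ℂ)
    (m M : ℝ) (hm : 0 < m) (hmM : m ≤ M)
    (h1 : (A - m • (1 : Matrix (Fin n) (Fin n) ℂ)).PosSemidef)
    (h2 : ((M • (1 : Matrix (Fin n) (Fin n) ℂ)) - A).PosSemidef)
    (X Y : Matrix (Fin n) (Fin k) ℂ)
    (hY : Yᴴ * Y = 1) (hXY : Xᴴ * Y = 0) :
    ((((M - m) / (M + m)) ^ 2) • (Xᴴ * A * X)
      - (Xᴴ * A * Y) * (Yᴴ * A * Y)⁻¹ * (Yᴴ * A * X)).PosSemidef := by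
  have hA : A.PosDef := by simpa using (PosDef.one.smul hm).add_posSemidef h1
  have hY_inj : Function.Injective Y.mulVec :=
    Function.LeftInverse.injective (g := Yᴴ.mulVec) fun v => by
      rw [mulVec_mulVec, hY, one_mulVec]
  have hQ : Yᴴ * A * X = (Xᴴ * A * Y)ᴴ := by
    simp only [conjTranspose_mul, conjTranspose_conjTranspose, hA.1.eq, Matrix.mul_assoc]
  rw [hQ]
  refine PosSemidef.smul_sub_mul_inv_mul_conjTranspose_of_norm_sq_le
    (hA.posSemidef.conjTranspose_mul_mul_same X) (hA.conjTranspose_mul_mul_same hY_inj)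
    (sq_nonneg _) fun u w => ?_
  simp only [← star_mulVec_dotProduct_mulVec_mulVec]
  refine wielandt_inequality hm hmM h1 h2 ?_
  rw [star_mulVec_dotProduct_mulVec, hXY, zero_mulVec, dotProduct_zero]

theorem operator_wielandt_inequality
    {n k : ℕ} (A : Matrix (Fin n) (Fin n) ℂ) (hA : A.IsHermitian)
    (m M : ℝ) (hm : 0 < m) (hmM : m ≤ M)
    (h1 : (A - m • (1 : Matrix (Fin n) (Fin n) ℂ)).PosSemidef)
    (h2 : ((M • (1 : Matrix (Fin n) (Fin n) ℂ)) - A).PosSemidef)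
    (X Y : Matrix (Fin n) (Fin k) ℂ)
    (hX : Xᴴ * X = 1) (hY : Yᴴ * Y = 1) (hXY : Xᴴ * Y = 0) :
    ((((M - m) / (M + m)) ^ 2) • (Xᴴ * A * X)
      - (Xᴴ * A * Y) * (Yᴴ * A * Y)⁻¹ * (Yᴴ * A * X)).PosSemidef :=
  operator_wielandt_inequality_general A m M hm hmM h1 h2 X Y hY hXY
end

section
/- Let A be an n×n Hermitian matrix with m·I ≤ A ≤ M·I, 0 < m ≤ M, and let X, Y be n×k isometries with X*Y = 0. For p > 1/2, set Γ = ((X*AY)(Y*AY)^{-1}(Y*AX))^p · (X*AX)^{-p}. Then ‖Γ‖ ≤ ((M−m)/(M+m))^{2p} · (M/m)^p. -/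
open Matrix
open scoped ComplexOrder
open scoped Matrix.Norms.L2Operator

open scoped MatrixOrder

/-!
Write `H = X*AX`, `B = X*AY`, `K = Y*AY` and `L = BK⁻¹B*`, so that `‖Γ‖ ≤ ‖L^p‖ ‖H^{-p}‖`.
Since `X` is an isometry, `m ≤ H ≤ M`, whence `‖H^{-p}‖ ≤ m^{-p}`. For `L`, put `u = K⁻¹B*v`:
then `v*Lv = (Xv)*A(Yu)` and `(Yu)*A(Yu) = v*Lv`, where `Xv ⊥ Yu`. Wielandt's inequality
`|x*Ay|² ≤ ((M-m)/(M+m))² (x*Ax)(y*Ay)` for `x ⊥ y` therefore gives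
`L ≤ ((M-m)/(M+m))² H ≤ ((M-m)/(M+m))² M`, so `‖L^p‖ ≤ ((M-m)/(M+m))^{2p} M^p`.
Wielandt's inequality itself comes from Cauchy–Schwarz for the positive forms of `A - m` and
`M - A`, both of which agree with `A` on an orthogonal pair.
-/

section CStarAlgebra

variable {𝔄 : Type*} [CStarAlgebra 𝔄] [PartialOrder 𝔄] [StarOrderedRing 𝔄]

lemma norm_cfc_rpow_le_of_le_algebraMap {a : 𝔄} {t p : ℝ} (ha : 0 ≤ a)
    (hat : a ≤ algebraMap ℝ 𝔄 t) (ht : 0 ≤ t) (hp : 0 ≤ p) :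
    ‖cfc (fun x : ℝ => x ^ p) a‖ ≤ t ^ p := by
  have hspec := (le_algebraMap_iff_spectrum_le (ha := ha.isSelfAdjoint)).1 hat
  refine norm_cfc_le (Real.rpow_nonneg ht p) fun x hx => ?_
  have hx0 : 0 ≤ x := spectrum_nonneg_of_nonneg ha hx
  rw [Real.norm_of_nonneg (Real.rpow_nonneg hx0 p)]
  exact Real.rpow_le_rpow hx0 (hspec x hx) hp

lemma norm_cfc_rpow_neg_le_of_algebraMap_le {a : 𝔄} {m p : ℝ} (hm : 0 < m)
    (hma : algebraMap ℝ 𝔄 m ≤ a) (hp : 0 ≤ p) :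
    ‖cfc (fun x : ℝ => x ^ (-p)) a‖ ≤ m ^ (-p) := by
  have hspec := (algebraMap_le_iff_le_spectrum
    (ha := IsSelfAdjoint.of_ge hma (.algebraMap 𝔄 (.all m)))).1 hma
  refine norm_cfc_le (Real.rpow_nonneg hm.le _) fun x hx => ?_
  have hmx := hspec x hx
  rw [Real.norm_of_nonneg (Real.rpow_nonneg (hm.le.trans hmx) _)]
  exact Real.rpow_le_rpow_of_nonpos hm hmx (neg_nonpos.2 hp)

end CStarAlgebra

lemma mul_add_sq_le_sub_sq_mul_mul {m M s q a b R : ℝ} (hm : 0 < m) (hmM : m ≤ M)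
    (ha : m * s ≤ a) (ha' : a ≤ M * s) (hb : m * q ≤ b) (hb' : b ≤ M * q)
    (h₁ : R ≤ (a - m * s) * (b - m * q)) (h₂ : R ≤ (M * s - a) * (M * q - b)) :
    R * (M + m) ^ 2 ≤ (M - m) ^ 2 * (a * b) := by
  have hM : 0 < M := hm.trans_le hmM
  have mixed : (M + m) * (M * ((a - m * s) * (b - m * q)) + m * ((M * s - a) * (M * q - b)))
      = (M - m) ^ 2 * (a * b) + m * M * (((M + m) * s - 2 * a) * ((M + m) * q - 2 * b)) := by
    ring
  have hR : R * (M + m) ^ 2 ≤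
      (M + m) * (M * ((a - m * s) * (b - m * q)) + m * ((M * s - a) * (M * q - b))) := by
    nlinarith [mul_le_mul_of_nonneg_left h₁ hM.le, mul_le_mul_of_nonneg_left h₂ hm.le]
  -- If `a` and `b` lie on the same side of the midpoints `(M + m) s / 2`, `(M + m) q / 2`, one
  -- of `h₁`, `h₂` suffices; otherwise the combination `M h₁ + m h₂` (that is, `hR`) does.
  rcases le_total (2 * a) ((M + m) * s) with has | has <;>
    rcases le_total (2 * b) ((M + m) * q) with hbq | hbq
  · have hxa : (a - m * s) * (M + m) ≤ (M - m) * a := by nlinarith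
    have hxb : (b - m * q) * (M + m) ≤ (M - m) * b := by nlinarith
    nlinarith [mul_le_mul hxa hxb (by nlinarith) (by nlinarith)]
  · nlinarith [mul_nonneg (mul_pos hm hM).le (mul_nonneg (sub_nonneg.2 has) (sub_nonneg.2 hbq))]
  · nlinarith [mul_nonneg (mul_pos hm hM).le (mul_nonneg (sub_nonneg.2 has) (sub_nonneg.2 hbq))]
  · have hxa : (M * s - a) * (M + m) ≤ (M - m) * a := by nlinarith
    have hxb : (M * q - b) * (M + m) ≤ (M - m) * b := by nlinarith
    nlinarith [mul_le_mul hxa hxb (by nlinarith) (by nlinarith)]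

lemma Matrix.PosSemidef.norm_dotProduct_mulVec_sq_le_s7 {ι : Type*} [Fintype ι]
    {N : Matrix ι ι ℂ} (hN : N.PosSemidef) (x y : ι → ℂ) :
    ‖star x ⬝ᵥ N *ᵥ y‖ ^ 2 ≤ (star x ⬝ᵥ N *ᵥ x).re * (star y ⬝ᵥ N *ᵥ y).re := by
  let := N.toSeminormedAddCommGroup hN
  let := N.toInnerProductSpace hN
  have hinner (u v : ι → ℂ) : (inner ℂ u v : ℂ) = star u ⬝ᵥ N *ᵥ v := dotProduct_comm _ _
  have := inner_mul_inner_self_le (𝕜 := ℂ) x y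
  rwa [norm_inner_symm y x, ← sq, hinner, hinner, hinner] at this

lemma Matrix.IsHermitian.posSemidef_of_re_nonneg {ι : Type*} [Fintype ι] {N : Matrix ι ι ℂ}
    (hN : N.IsHermitian) (h : ∀ x, 0 ≤ (star x ⬝ᵥ N *ᵥ x).re) : N.PosSemidef :=
  .of_dotProduct_mulVec_nonneg hN fun x =>
    Complex.nonneg_iff.2 ⟨h x, (hN.im_star_dotProduct_mulVec_self x).symm⟩

lemma Matrix.star_dotProduct_conjTranspose_mul_mul_mulVec {ι κ μ : Type*} [Fintype ι]
    [Fintype κ] [Fintype μ] (S : Matrix ι ι ℂ) (W : Matrix ι κ ℂ) (Z : Matrix ι μ ℂ)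
    (v : κ → ℂ) (w : μ → ℂ) :
    star v ⬝ᵥ (Wᴴ * S * Z) *ᵥ w = star (W *ᵥ v) ⬝ᵥ S *ᵥ (Z *ᵥ w) := by
  simp only [star_mulVec, dotProduct_mulVec, vecMul_vecMul, Matrix.mul_assoc]

lemma Matrix.PosDef.of_smul_one_le {ι : Type*} [DecidableEq ι] {A : Matrix ι ι ℂ} {c : ℝ}
    (hc : 0 < c) (h : c • 1 ≤ A) : A.PosDef := by
  simpa using (Matrix.PosDef.one.smul hc).posSemidef_add (Matrix.le_iff.1 h)

section Compression

variable {ι κ : Type*} [Fintype ι] [Fintype κ] [DecidableEq ι] [DecidableEq κ]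
  {A : Matrix ι ι ℂ} {c : ℝ} {X : Matrix ι κ ℂ}

lemma Matrix.smul_one_le_conjTranspose_mul_mul (h : c • 1 ≤ A) (hX : Xᴴ * X = 1) :
    c • 1 ≤ Xᴴ * A * X := by
  have : Xᴴ * A * X - c • 1 = Xᴴ * (A - c • 1) * X := by
    rw [Matrix.mul_sub, Matrix.sub_mul, Matrix.mul_smul, Matrix.smul_mul, Matrix.mul_one, hX]
  exact Matrix.le_iff.2 (this ▸ (Matrix.le_iff.1 h).conjTranspose_mul_mul_same X)

lemma Matrix.conjTranspose_mul_mul_le_smul_one (h : A ≤ c • 1) (hX : Xᴴ * X = 1) :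
    Xᴴ * A * X ≤ c • 1 := by
  have : c • 1 - Xᴴ * A * X = Xᴴ * (c • 1 - A) * X := by
    rw [Matrix.mul_sub, Matrix.sub_mul, Matrix.mul_smul, Matrix.smul_mul, Matrix.mul_one, hX]
  exact Matrix.le_iff.2 (this ▸ (Matrix.le_iff.1 h).conjTranspose_mul_mul_same X)

end Compression

lemma Matrix.PosSemidef.posSemidef_mul_inv_mul {ι κ μ : Type*} [Fintype ι] [Fintype κ]
    [Fintype μ] [DecidableEq μ] {A : Matrix ι ι ℂ} (hA : A.PosSemidef) (X : Matrix ι κ ℂ)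
    (Y : Matrix ι μ ℂ) : (Xᴴ * A * Y * (Yᴴ * A * Y)⁻¹ * (Yᴴ * A * X)).PosSemidef := by
  have hBH : Yᴴ * A * X = (Xᴴ * A * Y)ᴴ := by
    simp only [conjTranspose_mul, conjTranspose_conjTranspose, hA.isHermitian.eq,
      Matrix.mul_assoc]
  rw [hBH]
  exact (hA.conjTranspose_mul_mul_same Y).inv.mul_mul_conjTranspose_same _

section Wielandt

variable {ι κ μ : Type*} [Fintype ι] [Fintype κ] [Fintype μ] [DecidableEq ι] [DecidableEq μ]
  {A : Matrix ι ι ℂ} {m M : ℝ}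

theorem wielandt_inequality_s7 (hm : 0 < m) (hmM : m ≤ M)
    (hmA : m • 1 ≤ A) (hAM : A ≤ M • 1) {x y : ι → ℂ} (hxy : star x ⬝ᵥ y = 0) :
    ‖star x ⬝ᵥ A *ᵥ y‖ ^ 2 * (M + m) ^ 2 ≤
      (M - m) ^ 2 * ((star x ⬝ᵥ A *ᵥ x).re * (star y ⬝ᵥ A *ᵥ y).re) := by
  have hlo : (A - m • 1).PosSemidef := hmA
  have hhi : (M • 1 - A).PosSemidef := hAM
  have hx₁ := hlo.re_dotProduct_nonneg x
  have hx₂ := hhi.re_dotProduct_nonneg x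
  have hy₁ := hlo.re_dotProduct_nonneg y
  have hy₂ := hhi.re_dotProduct_nonneg y
  have cs₁ := hlo.norm_dotProduct_mulVec_sq_le_s7 x y
  have cs₂ := hhi.norm_dotProduct_mulVec_sq_le_s7 x y
  simp only [sub_mulVec, smul_mulVec, one_mulVec, dotProduct_sub, dotProduct_smul, hxy,
    smul_zero, sub_zero, zero_sub, norm_neg, Complex.sub_re, Complex.smul_re, smul_eq_mul,
    RCLike.re_to_complex] at hx₁ hx₂ hy₁ hy₂ cs₁ cs₂
  exact mul_add_sq_le_sub_sq_mul_mul hm hmM (by linarith) (by linarith) (by linarith)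
    (by linarith) cs₁ cs₂

theorem re_dotProduct_mul_inv_mul_mulVec_le (hm : 0 < m) (hmM : m ≤ M)
    (hmA : m • 1 ≤ A) (hAM : A ≤ M • 1) {X : Matrix ι κ ℂ} {Y : Matrix ι μ ℂ}
    (hXY : Xᴴ * Y = 0) (hK : (Yᴴ * A * Y).PosDef) (v : κ → ℂ) :
    (star v ⬝ᵥ (Xᴴ * A * Y * (Yᴴ * A * Y)⁻¹ * (Yᴴ * A * X)) *ᵥ v).re ≤
      ((M - m) / (M + m)) ^ 2 * (star v ⬝ᵥ (Xᴴ * A * X) *ᵥ v).re := by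
  have hA := (Matrix.PosDef.of_smul_one_le hm hmA).posSemidef
  have hL := hA.posSemidef_mul_inv_mul X Y
  set K := Yᴴ * A * Y
  set B := Xᴴ * A * Y
  have hBH : Yᴴ * A * X = Bᴴ := by
    simp only [B, conjTranspose_mul, conjTranspose_conjTranspose, hA.isHermitian.eq,
      Matrix.mul_assoc]
  rw [hBH] at hL ⊢
  set L := B * K⁻¹ * Bᴴ
  set u := (K⁻¹ * Bᴴ) *ᵥ v
  have hLv : star v ⬝ᵥ L *ᵥ v = star (X *ᵥ v) ⬝ᵥ A *ᵥ (Y *ᵥ u) := by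
    rw [← star_dotProduct_conjTranspose_mul_mul_mulVec, mulVec_mulVec]
    simp only [L, B, Matrix.mul_assoc]
  have hYu : star (Y *ᵥ u) ⬝ᵥ A *ᵥ (Y *ᵥ u) = star v ⬝ᵥ L *ᵥ v := by
    have hKinv : K⁻¹ᴴ = K⁻¹ := hK.isHermitian.inv.eq
    have hKK : K⁻¹ * K = 1 := nonsing_inv_mul K ((isUnit_iff_isUnit_det K).1 hK.isUnit)
    rw [← star_dotProduct_conjTranspose_mul_mul_mulVec,
      ← star_dotProduct_conjTranspose_mul_mul_mulVec, conjTranspose_mul,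
      conjTranspose_conjTranspose, hKinv, Matrix.mul_assoc B, hKK, Matrix.mul_one,
      ← Matrix.mul_assoc]
  have horth : star (X *ᵥ v) ⬝ᵥ (Y *ᵥ u) = 0 := by
    simpa [hXY] using (star_dotProduct_conjTranspose_mul_mul_mulVec 1 X Y v u).symm
  have hw := wielandt_inequality_s7 hm hmM hmA hAM horth
  rw [← hLv, hYu, ← star_dotProduct_conjTranspose_mul_mul_mulVec,
    ← Complex.re_eq_norm.2 (hL.dotProduct_mulVec_nonneg v)] at hw
  have hF := hL.re_dotProduct_nonneg v
  have hh := (hA.conjTranspose_mul_mul_same X).re_dotProduct_nonneg v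
  simp only [RCLike.re_to_complex] at hF hh
  have hMm : 0 < M + m := by linarith
  rw [div_pow, div_mul_eq_mul_div, le_div_iff₀ (by positivity)]
  rcases hF.eq_or_lt with hF0 | hFpos
  · rw [← hF0, zero_mul]
    exact mul_nonneg (sq_nonneg _) hh
  · nlinarith

theorem mul_inv_mul_le_of_conjTranspose_mul_eq_zero (hm : 0 < m) (hmM : m ≤ M)
    (hmA : m • 1 ≤ A) (hAM : A ≤ M • 1) {X : Matrix ι κ ℂ} {Y : Matrix ι μ ℂ}
    (hXY : Xᴴ * Y = 0) (hK : (Yᴴ * A * Y).PosDef) :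
    Xᴴ * A * Y * (Yᴴ * A * Y)⁻¹ * (Yᴴ * A * X) ≤ ((M - m) / (M + m)) ^ 2 • (Xᴴ * A * X) := by
  have hA := (Matrix.PosDef.of_smul_one_le hm hmA).posSemidef
  have hL := (hA.posSemidef_mul_inv_mul X Y).isHermitian
  have hH := (hA.conjTranspose_mul_mul_same X).isHermitian
  refine ((hH.smul (.all _)).sub hL).posSemidef_of_re_nonneg fun v => ?_
  simp only [sub_mulVec, smul_mulVec, dotProduct_sub, dotProduct_smul, Complex.sub_re,
    Complex.smul_re, smul_eq_mul, sub_nonneg]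
  exact re_dotProduct_mul_inv_mul_mulVec_le hm hmM hmA hAM hXY hK v

end Wielandt

lemma rpow_sq_mul_mul_rpow_neg {c M m p : ℝ} (hc : 0 ≤ c) (hM : 0 ≤ M) (hm : 0 ≤ m) :
    (c ^ 2 * M) ^ p * m ^ (-p) = c ^ (2 * p) * (M / m) ^ p := by
  rw [Real.mul_rpow (sq_nonneg c) hM, Real.rpow_mul hc, Real.rpow_two, Real.rpow_neg hm,
    Real.div_rpow hM hm]
  ring

theorem norm_Gamma_le_of_half_lt_p_general
    {n k : ℕ} (A : Matrix (Fin n) (Fin n) ℂ)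
    (m M : ℝ) (hm : 0 < m) (hmM : m ≤ M)
    (h1 : (A - m • (1 : Matrix (Fin n) (Fin n) ℂ)).PosSemidef)
    (h2 : ((M • (1 : Matrix (Fin n) (Fin n) ℂ)) - A).PosSemidef)
    (X Y : Matrix (Fin n) (Fin k) ℂ)
    (hX : Xᴴ * X = 1) (hY : Yᴴ * Y = 1) (hXY : Xᴴ * Y = 0)
    (p : ℝ) (hp : 1 / 2 < p) :
    ‖cfc (fun x : ℝ => x ^ p) ((Xᴴ * A * Y) * (Yᴴ * A * Y)⁻¹ * (Yᴴ * A * X))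
        * cfc (fun x : ℝ => x ^ (-p)) (Xᴴ * A * X)‖ ≤
      ((M - m) / (M + m)) ^ (2 * p) * (M / m) ^ p := by
  have hp0 : 0 ≤ p := by linarith
  have hM : 0 < M := hm.trans_le hmM
  have hc : 0 ≤ (M - m) / (M + m) := div_nonneg (by linarith) (by linarith)
  have hH : m • 1 ≤ Xᴴ * A * X := smul_one_le_conjTranspose_mul_mul h1 hX
  have hK : (Yᴴ * A * Y).PosDef :=
    .of_smul_one_le hm (smul_one_le_conjTranspose_mul_mul h1 hY)
  have hL₀ := ((PosDef.of_smul_one_le hm h1).posSemidef.posSemidef_mul_inv_mul X Y).nonneg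
  have hL : Xᴴ * A * Y * (Yᴴ * A * Y)⁻¹ * (Yᴴ * A * X) ≤
      algebraMap ℝ _ (((M - m) / (M + m)) ^ 2 * M) := by
    refine (mul_inv_mul_le_of_conjTranspose_mul_eq_zero hm hmM h1 h2 hXY hK).trans ?_
    rw [Algebra.algebraMap_eq_smul_one, mul_smul, Matrix.le_iff, ← smul_sub]
    exact (Matrix.le_iff.1 (conjTranspose_mul_mul_le_smul_one h2 hX)).smul (sq_nonneg _)
  calc _ ≤ ‖cfc (fun x : ℝ => x ^ p) (Xᴴ * A * Y * (Yᴴ * A * Y)⁻¹ * (Yᴴ * A * X))‖ *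
        ‖cfc (fun x : ℝ => x ^ (-p)) (Xᴴ * A * X)‖ := norm_mul_le _ _
    _ ≤ (((M - m) / (M + m)) ^ 2 * M) ^ p * m ^ (-p) := by
      gcongr
      · exact norm_cfc_rpow_le_of_le_algebraMap hL₀ hL (by positivity) hp0
      · exact norm_cfc_rpow_neg_le_of_algebraMap_le hm
          (by rwa [Algebra.algebraMap_eq_smul_one]) hp0
    _ = _ := rpow_sq_mul_mul_rpow_neg hc hM.le hm.le

theorem norm_Gamma_le_of_half_lt_p
    {n k : ℕ} (A : Matrix (Fin n) (Fin n) ℂ) (hA : A.IsHermitian)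
    (m M : ℝ) (hm : 0 < m) (hmM : m ≤ M)
    (h1 : (A - m • (1 : Matrix (Fin n) (Fin n) ℂ)).PosSemidef)
    (h2 : ((M • (1 : Matrix (Fin n) (Fin n) ℂ)) - A).PosSemidef)
    (X Y : Matrix (Fin n) (Fin k) ℂ)
    (hX : Xᴴ * X = 1) (hY : Yᴴ * Y = 1) (hXY : Xᴴ * Y = 0)
    (p : ℝ) (hp : 1 / 2 < p) :
    ‖cfc (fun x : ℝ => x ^ p) ((Xᴴ * A * Y) * (Yᴴ * A * Y)⁻¹ * (Yᴴ * A * X))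
        * cfc (fun x : ℝ => x ^ (-p)) (Xᴴ * A * X)‖ ≤
      ((M - m) / (M + m)) ^ (2 * p) * (M / m) ^ p :=
  norm_Gamma_le_of_half_lt_p_general A m M hm hmM h1 h2 X Y hX hY hXY p hp
end

section
/- For real numbers 0 < m < M and p > 2 + 2·log_{M/m}(2), the bound of Theorem 2 beats that of Theorem 3: ((M−m)/(M+m))^{2p}·(M/m)^p < ((M−m)/(M+m))^{2p}·( ((M/m)^{p/2}+(m/M)^{p/2})/2 )^{⌈p⌉}, i.e. (M/m)^p < ( ((M/m)^{p/2}+(m/M)^{p/2})/2 )^{⌈p⌉}. -/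
theorem theorem_two_bound_lt_theorem_three_bound (m M p : ℝ) (hm : 0 < m) (hmM : m < M)
    (hp : 2 + 2 * Real.logb (M / m) 2 < p) :
    (M / m) ^ p < (((M / m) ^ (p / 2) + (m / M) ^ (p / 2)) / 2) ^ (⌈p⌉ : ℤ) := by
  have hM : 0 < M := hm.trans hmM
  have hr : 1 < M / m := (one_lt_div hm).mpr hmM
  have hr0 : 0 < M / m := lt_trans one_pos hr
  set r := M / m with hrdef
  have hlb0 : 0 ≤ Real.logb r 2 := Real.logb_nonneg hr one_le_two
  have hp0 : 0 < p := by linarith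
  have hlogb : r ^ Real.logb r 2 = 2 := Real.rpow_logb hr0 (ne_of_gt hr) two_pos
  have hp2 : 1 + Real.logb r 2 < p / 2 := by linarith
  have hx2r : 2 * r < r ^ (p / 2) := by
    calc 2 * r = r ^ (1 + Real.logb r 2) := by
          rw [Real.rpow_add hr0, Real.rpow_one, hlogb]; ring
      _ < r ^ (p / 2) := (Real.rpow_lt_rpow_left_iff hr).mpr hp2
  set x := r ^ (p / 2) with hxdef
  have hx0 : 0 < x := Real.rpow_pos_of_pos hr0 _
  have hinv : (m / M) ^ (p / 2) = x⁻¹ := by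
    rw [show m / M = r⁻¹ by rw [hrdef, inv_div], Real.inv_rpow hr0.le]
  have hrx2 : r < x / 2 := by linarith
  have h1x2 : 1 ≤ x / 2 := le_of_lt (lt_trans hr hrx2)
  have hceil : (p : ℝ) ≤ (⌈p⌉ : ℤ) := Int.le_ceil p
  have hAle : x / 2 ≤ (x + x⁻¹) / 2 := by
    have : 0 < x⁻¹ := inv_pos.mpr hx0
    linarith
  rw [hinv]
  calc r ^ p < (x / 2) ^ p := Real.rpow_lt_rpow hr0.le hrx2 hp0
    _ ≤ (x / 2) ^ ((⌈p⌉ : ℤ) : ℝ) :=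
        Real.rpow_le_rpow_of_exponent_le h1x2 hceil
    _ ≤ ((x + x⁻¹) / 2) ^ ((⌈p⌉ : ℤ) : ℝ) :=
        Real.rpow_le_rpow (by linarith) hAle (by exact_mod_cast le_trans hp0.le hceil)
    _ = ((x + x⁻¹) / 2) ^ (⌈p⌉ : ℤ) := Real.rpow_intCast _ _
end
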